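/- For every real ι > 0 such that ι/β is not an integer, both ψ and w are differentiable at ι, and their derivatives satisfy w'(ι) = exp(−αι)·ψ'(ι). -/

import Mathlib

/-!
Away from the multiples of `β` the number `⌊ι/β⌋₊ + 1` of summands is locally constant, so `ψ`
and `w` can be differentiated termwise, using `R_i'(x) = x^i/i! · e^{-x}`. The `i`-th terms of
`w'` and `e^{-αι} ψ'` then agree because `α + γ = Δ + ν`, `ν^i = γ^i e^{-iαβ}` and
`e^{-iαβ} e^{-(α+γ)(ι-iβ)} = e^{-αι} e^{-γ(ι-iβ)}`.
-/

open Real Finset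

/-- Normalized residual of the `i`-th Taylor approximation of the exponential:
`R_i(x) = (exp x − ∑_{j=0}^{i} x^j/j!) / exp x`. -/
noncomputable def Rres (i : ℕ) (x : ℝ) : ℝ :=
  (Real.exp x - ∑ j ∈ Finset.range (i + 1), x ^ j / (Nat.factorial j : ℝ)) / Real.exp x

/-- Expected crawl-interval length `ψ(ι) = ∑_{i=0}^{⌊ι/β⌋} (1/γ)·R_i(γ(ι − iβ))`. -/
noncomputable def psi (γ β : ℝ) (ι : ℝ) : ℝ :=
  ∑ i ∈ Finset.range (⌊ι / β⌋₊ + 1), (1 / γ) * Rres i (γ * (ι - (i : ℝ) * β))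

/-- Expected cumulative freshness `w(ι) = ∑_{i=0}^{⌊ι/β⌋} (ν^i/(Δ+ν)^{i+1})·R_i((α+γ)(ι − iβ))`. -/
noncomputable def wfun (α β γ ν Δ : ℝ) (ι : ℝ) : ℝ :=
  ∑ i ∈ Finset.range (⌊ι / β⌋₊ + 1),
    (ν ^ i / (Δ + ν) ^ (i + 1)) * Rres i ((α + γ) * (ι - (i : ℝ) * β))

open Filter Topology
open scoped Nat

section FloorLocallyConstant

variable {α : Type*} [Ring α] [LinearOrder α] [FloorRing α]
  [TopologicalSpace α] [OrderTopology α] {x : α}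

theorem Int.eventually_floor_eq (hx : ∀ k : ℤ, x ≠ k) : ∀ᶠ y in 𝓝 x, ⌊y⌋ = ⌊x⌋ := by
  have hlt : (⌊x⌋ : α) < x := (Int.floor_le x).lt_of_ne (hx ⌊x⌋).symm
  filter_upwards [Ioo_mem_nhds hlt (Int.lt_floor_add_one x)] with y hy
  exact Int.floor_eq_iff.2 ⟨hy.1.le, hy.2⟩

theorem Nat.eventually_floor_eq (hx : ∀ k : ℤ, x ≠ k) : ∀ᶠ y in 𝓝 x, ⌊y⌋₊ = ⌊x⌋₊ := by
  filter_upwards [Int.eventually_floor_eq hx] with y hy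
  rw [← Int.floor_toNat, hy, Int.floor_toNat]

end FloorLocallyConstant

theorem Rres_eq (i : ℕ) (x : ℝ) :
    Rres i x = 1 - (∑ j ∈ range (i + 1), x ^ j / (j ! : ℝ)) * exp (-x) := by
  rw [Rres, sub_div, div_self (exp_ne_zero x), exp_neg, div_eq_mul_inv]

theorem Rres_succ (i : ℕ) (x : ℝ) :
    Rres (i + 1) x = Rres i x - x ^ (i + 1) / ((i + 1) ! : ℝ) * exp (-x) := by
  rw [Rres_eq, Rres_eq, sum_range_succ]
  ring

theorem hasDerivAt_Rres (i : ℕ) (x : ℝ) :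
    HasDerivAt (Rres i) (x ^ i / (i ! : ℝ) * exp (-x)) x := by
  have hexp : HasDerivAt (fun y => exp (-y)) (-exp (-x)) x := by
    simpa using (hasDerivAt_neg x).exp
  induction i with
  | zero =>
    have h : Rres 0 = fun y => 1 - exp (-y) := by
      funext y
      simp [Rres_eq]
    rw [h]
    simpa using hexp.const_sub 1
  | succ i ih =>
    have hterm := ((hasDerivAt_pow (i + 1) x).div_const ((i + 1) ! : ℝ)).fun_mul hexp
    rw [show Rres (i + 1) = _ from funext (Rres_succ i)]
    refine (ih.fun_sub hterm).congr_deriv ?_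
    rw [Nat.factorial_succ]
    push_cast
    field_simp
    ring

theorem hasDerivAt_Rres_comp (i : ℕ) (a c x : ℝ) :
    HasDerivAt (fun t => Rres i (a * (t - c)))
      (a * ((a * (x - c)) ^ i / (i ! : ℝ) * exp (-(a * (x - c))))) x := by
  have hlin : HasDerivAt (fun t => a * (t - c)) a x := by
    simpa using ((hasDerivAt_id x).sub_const c).const_mul a
  rw [mul_comm a]
  exact (hasDerivAt_Rres i _).comp x hlin

theorem hasDerivAt_sum_range_floor_div {f : ℕ → ℝ → ℝ} {f' : ℕ → ℝ} {β x : ℝ}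
    (hx : ∀ k : ℤ, x / β ≠ k) (hf : ∀ i, HasDerivAt (f i) (f' i) x) :
    HasDerivAt (fun t => ∑ i ∈ range (⌊t / β⌋₊ + 1), f i t)
      (∑ i ∈ range (⌊x / β⌋₊ + 1), f' i) x := by
  have hfloor : ∀ᶠ t in 𝓝 x, ⌊t / β⌋₊ = ⌊x / β⌋₊ :=
    (continuous_id.div_const β).continuousAt.eventually (Nat.eventually_floor_eq hx)
  refine (HasDerivAt.fun_sum fun i _ => hf i).congr_of_eventuallyEq ?_
  filter_upwards [hfloor] with t ht
  rw [ht]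

theorem deriv_term_wfun_eq_exp_mul_deriv_term_psi {α β γ : ℝ} (hαγ : α + γ ≠ 0) (hγ : γ ≠ 0)
    (i : ℕ) (ι : ℝ) :
    (γ * exp (-(α * β))) ^ i / (α + γ) ^ (i + 1) *
        ((α + γ) * (((α + γ) * (ι - i * β)) ^ i / (i ! : ℝ) * exp (-((α + γ) * (ι - i * β))))) =
      exp (-(α * ι)) * (1 / γ * (γ * ((γ * (ι - i * β)) ^ i / (i ! : ℝ) *
        exp (-(γ * (ι - i * β)))))) := by
  set s := ι - i * β with hs
  have hexp : exp (-(α * β)) ^ i * exp (-((α + γ) * s)) = exp (-(α * ι)) * exp (-(γ * s)) := by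
    rw [← exp_nat_mul, ← exp_add, ← exp_add, hs]
    ring_nf
  calc _ = γ ^ i * s ^ i / (i ! : ℝ) * (exp (-(α * β)) ^ i * exp (-((α + γ) * s))) := by
        rw [mul_pow, mul_pow, pow_succ]
        field_simp
    _ = _ := by
        rw [hexp, mul_pow]
        field_simp

theorem stmt_8_general (α β γ ν Δ : ℝ) (hα : 0 < α) (hγ : 0 < γ)
    (hrates : α + γ = Δ + ν) (hnu : ν = γ * Real.exp (-(α * β)))
    (ι : ℝ) (hnotint : ∀ k : ℤ, ι / β ≠ (k : ℝ)) :
    DifferentiableAt ℝ (psi γ β) ι ∧ DifferentiableAt ℝ (wfun α β γ ν Δ) ι ∧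
    deriv (wfun α β γ ν Δ) ι = Real.exp (-(α * ι)) * deriv (psi γ β) ι := by
  have hpsi : HasDerivAt (psi γ β) _ ι := hasDerivAt_sum_range_floor_div hnotint fun i =>
    (hasDerivAt_Rres_comp i γ (i * β) ι).const_mul (1 / γ)
  have hw : HasDerivAt (wfun α β γ ν Δ) _ ι := hasDerivAt_sum_range_floor_div hnotint fun i =>
    (hasDerivAt_Rres_comp i (α + γ) (i * β) ι).const_mul (ν ^ i / (Δ + ν) ^ (i + 1))
  refine ⟨hpsi.differentiableAt, hw.differentiableAt, ?_⟩
  rw [hpsi.deriv, hw.deriv, mul_sum, ← hrates, hnu]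
  exact sum_congr rfl fun i _ =>
    deriv_term_wfun_eq_exp_mul_deriv_term_psi (by positivity) hγ.ne' i ι

/-- For every real `ι > 0` such that `ι/β` is not an integer, both `ψ` and `w` are differentiable
at `ι`, and their derivatives satisfy `w'(ι) = exp(−αι)·ψ'(ι)`. -/
theorem stmt_8 (α β γ ν Δ : ℝ) (hα : 0 < α) (hβ : 0 < β) (hγ : 0 < γ) (hν : 0 < ν)
    (hΔ : 0 < Δ) (hrates : α + γ = Δ + ν) (hnu : ν = γ * Real.exp (-(α * β)))
    (ι : ℝ) (hι : 0 < ι) (hnotint : ∀ k : ℤ, ι / β ≠ (k : ℝ)) :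
    DifferentiableAt ℝ (psi γ β) ι ∧ DifferentiableAt ℝ (wfun α β γ ν Δ) ι ∧
    deriv (wfun α β γ ν Δ) ι = Real.exp (-(α * ι)) * deriv (psi γ β) ι :=
  stmt_8_general α β γ ν Δ hα hγ hrates hnu ι hnotint
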